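/- Let d ≥ 2, 𝒴 a finite set, and W : Fin d → 𝒴 → ℝ a channel with all entries strictly positive and each row a probability vector. Define the symmetrized channel W̄ on output alphabet (permutations of Fin d) × 𝒴 by W̄((π, y)|x) = W(y|π^{-1}x)/d!. Then for every pair of inputs a ≠ b: χ²(W̄(·|b) ‖ W̄(·|a)) = (1/(d(d−1))) · ∑_{i ≠ j} χ²(W(·|j) ‖ W(·|i)) ≤ max_{i≠j} χ²(W(·|j) ‖ W(·|i)). -/

import Mathlib

/-!
Averaging over relabelings turns the χ² divergence between two rows of the symmetrized channel
into the average of `χ²(W(·|π⁻¹b) ‖ W(·|π⁻¹a))` over all permutations `π`. The pair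
`(π⁻¹a, π⁻¹b)` runs over the orbit of `(a, b)` under the diagonal action of the symmetric
group, which is the whole off-diagonal, and a uniform average over a group is the uniform
average over any orbit. An average never exceeds the maximum.
-/

open Finset BigOperators

namespace MulAction

variable {G X M : Type*} [Group G] [Fintype G] [MulAction G X] [AddCommMonoid M] [Module ℚ≥0 M]

lemma expect_smul_eq_of_mem_orbit (f : X → M) {x y : X} (hy : y ∈ orbit G x) :
    𝔼 g : G, f (g • y) = 𝔼 g : G, f (g • x) := by
  obtain ⟨h, rfl⟩ := hy
  exact Fintype.expect_equiv (Equiv.mulRight h) _ _ fun g => by simp [mul_smul]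

lemma expect_smul_eq_expect_orbit (f : X → M) (x : X) {s : Finset X}
    (hs : (s : Set X) = orbit G x) : 𝔼 g : G, f (g • x) = 𝔼 y ∈ s, f y := by
  have hmem (y : X) : y ∈ s ↔ y ∈ orbit G x := by rw [← hs, mem_coe]
  have htranslate (g : G) : 𝔼 y ∈ s, f (g • y) = 𝔼 y ∈ s, f y := by
    refine expect_nbij' (g • ·) (g⁻¹ • ·) (fun y hy => ?_) (fun y hy => ?_)
      (fun y _ => inv_smul_smul g y) (fun y _ => smul_inv_smul g y) fun _ _ => rfl
    all_goals rw [hmem] at hy ⊢; exact mem_orbit_of_mem_orbit _ hy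
  calc 𝔼 g : G, f (g • x) = 𝔼 y ∈ s, 𝔼 g : G, f (g • y) :=
        ((expect_congr rfl fun y hy => expect_smul_eq_of_mem_orbit f ((hmem y).1 hy)).trans
          (expect_const ⟨x, (hmem x).2 (mem_orbit_self x)⟩ _)).symm
    _ = 𝔼 g : G, 𝔼 y ∈ s, f (g • y) := expect_comm _ _ _
    _ = 𝔼 y ∈ s, f y := by simp only [htranslate, expect_const univ_nonempty]

end MulAction

namespace Equiv.Perm

variable {α : Type*} [DecidableEq α]

lemma orbit_pair_eq {a b : α} (hab : a ≠ b) :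
    MulAction.orbit (Perm α) (a, b) = {p | p.1 ≠ p.2} := by
  ext ⟨i, j⟩
  constructor
  · rintro ⟨σ, hσ⟩
    simp only [Prod.smul_mk, Prod.mk.injEq] at hσ
    rw [← hσ.1, ← hσ.2]
    exact σ.injective.ne hab
  · intro (hij : i ≠ j)
    set b' := swap a i b
    have hb' : b' ≠ i := by
      simpa [b', swap_apply_right] using (swap a i).injective.ne hab.symm
    exact ⟨swap b' j * swap a i, by simp [b', swap_apply_of_ne_of_ne hb'.symm hij]⟩

lemma expect_apply_pair_eq_expect_offDiag [Fintype α] {M : Type*} [AddCommMonoid M]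
    [Module ℚ≥0 M] (f : α × α → M) {a b : α} (hab : a ≠ b) :
    𝔼 σ : Perm α, f (σ a, σ b) = 𝔼 p ∈ univ.offDiag, f p :=
  MulAction.expect_smul_eq_expect_orbit f (a, b) <| by
    rw [orbit_pair_eq hab]
    ext
    simp

end Equiv.Perm

section ChiSquare

variable {ι κ : Type*} [Fintype ι] [Fintype κ]

noncomputable def chiSq (q p : ι → ℝ) : ℝ := ∑ y, (q y - p y) ^ 2 / p y

-- Unconditional: since `x / 0 = 0`, both sides vanish termwise when `k = 0` or `p y = 0`.
lemma chiSq_div_const (q p : ι → ℝ) (k : ℝ) :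
    chiSq (fun y => q y / k) (fun y => p y / k) = chiSq q p / k := by
  rw [chiSq, chiSq, sum_div]
  refine sum_congr rfl fun y _ => ?_
  rcases eq_or_ne k 0 with rfl | hk
  · simp
  · rw [← sub_div, div_pow, div_div, div_div]
    congr 1
    field_simp

lemma chiSq_prod (q p : κ × ι → ℝ) :
    chiSq q p = ∑ i, chiSq (fun y => q (i, y)) (fun y => p (i, y)) :=
  Fintype.sum_prod_type _

end ChiSquare

theorem symmetrization_chi_square_general (d : ℕ)
    (Y : Type) [Fintype Y]
    (W : Fin d → Y → ℝ)
    (Wbar : Fin d → (Equiv.Perm (Fin d) × Y) → ℝ)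
    (hWbar : ∀ x π y, Wbar x (π, y) = W (π⁻¹ x) y / (Nat.factorial d : ℝ)) :
    ∀ a b : Fin d, a ≠ b →
      (∑ z : Equiv.Perm (Fin d) × Y, (Wbar b z - Wbar a z) ^ 2 / Wbar a z
          = (1 / ((d : ℝ) * ((d : ℝ) - 1))) *
              ∑ ij ∈ Finset.univ.offDiag, ∑ y, (W ij.2 y - W ij.1 y) ^ 2 / W ij.1 y)
      ∧ (∑ z : Equiv.Perm (Fin d) × Y, (Wbar b z - Wbar a z) ^ 2 / Wbar a z
          ≤ sSup {c : ℝ | ∃ i j : Fin d, i ≠ j ∧ c = ∑ y, (W j y - W i y) ^ 2 / W i y}) := by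
  intro a b hab
  set χ : Fin d × Fin d → ℝ := fun ij => chiSq (W ij.2) (W ij.1)
  have havg : chiSq (Wbar b) (Wbar a) = 𝔼 ij ∈ univ.offDiag, χ ij := calc
    chiSq (Wbar b) (Wbar a) = ∑ π : Equiv.Perm (Fin d), χ (π⁻¹ a, π⁻¹ b) / d.factorial := by
      simp only [chiSq_prod, hWbar, chiSq_div_const, χ]
    _ = 𝔼 π : Equiv.Perm (Fin d), χ (π a, π b) := by
      rw [← sum_div, Fintype.expect_eq_sum_div_card, Fintype.card_perm, Fintype.card_fin]
      congr 1
      exact Fintype.sum_equiv (Equiv.inv _) _ _ fun _ => rfl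
    _ = 𝔼 ij ∈ univ.offDiag, χ ij := Equiv.Perm.expect_apply_pair_eq_expect_offDiag χ hab
  refine ⟨?_, ?_⟩
  · change chiSq (Wbar b) (Wbar a) = 1 / (d * (d - 1)) * ∑ ij ∈ univ.offDiag, χ ij
    rw [havg, expect_eq_sum_div_card, offDiag_card, card_univ, Fintype.card_fin,
      Nat.cast_sub (Nat.le_mul_self d)]
    push_cast
    ring
  · have hbdd : BddAbove {c : ℝ | ∃ i j : Fin d, i ≠ j ∧ c = χ (i, j)} :=
      (Set.finite_range χ).bddAbove.mono <| by rintro _ ⟨i, j, -, rfl⟩; exact ⟨(i, j), rfl⟩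
    change chiSq (Wbar b) (Wbar a) ≤ _
    rw [havg]
    exact expect_le ⟨(a, b), by simpa using hab⟩ fun ij hij =>
      le_csSup hbdd ⟨ij.1, ij.2, (mem_offDiag.1 hij).2.2, rfl⟩

/-- **Symmetrization does not increase the pairwise chi-square budget**
(Theorem 9.1, eq. (9.1)).  For the symmetrized channel
`W̄((π,y)|x) = W(y|π⁻¹x)/d!` on `(permutations of Fin d) × 𝒴` and every pair `a ≠ b`,
`χ²(W̄(·|b) ‖ W̄(·|a)) = (1/(d(d−1))) ∑_{i≠j} χ²(W(·|j) ‖ W(·|i))`, which is at most the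
worst-case pairwise chi-square divergence of `W`. -/
theorem symmetrization_chi_square (d : ℕ) (hd : 2 ≤ d)
    (Y : Type) [Fintype Y]
    (W : Fin d → Y → ℝ) (hpos : ∀ x y, 0 < W x y) (hrow : ∀ x, ∑ y, W x y = 1)
    (Wbar : Fin d → (Equiv.Perm (Fin d) × Y) → ℝ)
    (hWbar : ∀ x π y, Wbar x (π, y) = W (π⁻¹ x) y / (Nat.factorial d : ℝ)) :
    ∀ a b : Fin d, a ≠ b →
      (∑ z : Equiv.Perm (Fin d) × Y, (Wbar b z - Wbar a z) ^ 2 / Wbar a z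
          = (1 / ((d : ℝ) * ((d : ℝ) - 1))) *
              ∑ ij ∈ Finset.univ.offDiag, ∑ y, (W ij.2 y - W ij.1 y) ^ 2 / W ij.1 y)
      ∧ (∑ z : Equiv.Perm (Fin d) × Y, (Wbar b z - Wbar a z) ^ 2 / Wbar a z
          ≤ sSup {c : ℝ | ∃ i j : Fin d, i ≠ j ∧ c = ∑ y, (W j y - W i y) ^ 2 / W i y}) :=
  symmetrization_chi_square_general d Y W Wbar hWbar
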